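/- Let M ∈ ℝ^{m×d} be a Gaussian random matrix, let x ∈ ℝ^d and y ∈ ℝ^m, and let x, x' ∈ S^{d−1}, y, y' ∈ S^{m−1}. Define the Gaussian processes X_{x,y} = ⟨Mx, y⟩ and Y_{x,y} = (1/√A)⟨g, Ωx⟩ + ⟨h, y⟩, where g ∈ ℝ^p, h ∈ ℝ^m are independent standard Gaussian vectors and Ω is a frame with lower bound A. Then E|X_{x,y} − X_{x',y'}|² ≤ E|Y_{x,y} − Y_{x',y'}|² for all such pairs, with equality when x = x'. -/

import Mathlib

/-
Both increments are centred linear forms in independent standard Gaussians, so their second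
moments are sums of squared coefficients:
`E|X_{x,y} - X_{x',y'}|² = ‖y ⊗ x - y' ⊗ x'‖² = 2 - 2⟨x,x'⟩⟨y,y'⟩` and
`E|Y_{x,y} - Y_{x',y'}|² = A⁻¹‖Ω(x - x')‖² + ‖y - y'‖²`. The frame bound gives
`A⁻¹‖Ω(x - x')‖² ≥ ‖x - x'‖² = 2 - 2⟨x,x'⟩`, so the difference of the two is at least
`2(1 - ⟨x,x'⟩)(1 - ⟨y,y'⟩) ≥ 0` by Cauchy–Schwarz; for `x = x'` both sides equal `‖y - y'‖²`.
-/

open MeasureTheory ProbabilityTheory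

noncomputable section

def l2 {n : ℕ} (v : Fin n → ℝ) : ℝ := Real.sqrt (∑ i, (v i) ^ 2)

def dot {n : ℕ} (u v : Fin n → ℝ) : ℝ := ∑ i, u i * v i

def mulVec' {m d : ℕ} (M : Fin m → Fin d → ℝ) (x : Fin d → ℝ) : Fin m → ℝ :=
  fun i => ∑ j, M i j * x j

def stdGaussian (n : ℕ) : Measure (Fin n → ℝ) :=
  Measure.pi (fun _ => gaussianReal 0 1)

def stdGaussianMatrix (m d : ℕ) : Measure (Fin m → Fin d → ℝ) :=
  Measure.pi (fun _ => stdGaussian d)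

instance (n : ℕ) : IsProbabilityMeasure (stdGaussian n) := by
  unfold _root_.stdGaussian; infer_instance

instance (m d : ℕ) : IsProbabilityMeasure (stdGaussianMatrix m d) := by
  unfold stdGaussianMatrix; infer_instance

section Pi

variable {ι : Type*} [Fintype ι] {E : ι → Type*} [∀ i, MeasurableSpace (E i)]
  {μ : ∀ i, Measure (E i)} [∀ i, IsProbabilityMeasure (μ i)] {X : ∀ i, E i → ℝ}

lemma memLp_sum_pi {p : ENNReal} (hX : ∀ i, MemLp (X i) p (μ i)) :
    MemLp (fun ω => ∑ i, X i (ω i)) p (Measure.pi μ) :=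
  memLp_finsetSum _ fun i _ => (hX i).comp_measurePreserving (measurePreserving_eval μ i)

lemma integral_sum_pi (hX : ∀ i, Integrable (X i) (μ i)) :
    ∫ ω, ∑ i, X i (ω i) ∂Measure.pi μ = ∑ i, ∫ e, X i e ∂μ i := by
  rw [integral_finsetSum _ fun i _ => integrable_comp_eval (hX i)]
  exact Finset.sum_congr rfl fun i _ => integral_comp_eval (hX i).aestronglyMeasurable

lemma integral_sq_sum_pi (hX : ∀ i, MemLp (X i) 2 (μ i)) (hX₀ : ∀ i, ∫ e, X i e ∂μ i = 0) :
    ∫ ω, (∑ i, X i (ω i)) ^ 2 ∂Measure.pi μ = ∑ i, ∫ e, X i e ^ 2 ∂μ i := by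
  have hmean : ∫ ω, ∑ i, X i (ω i) ∂Measure.pi μ = 0 := by
    simp [integral_sum_pi fun i => (hX i).integrable one_le_two, hX₀]
  rw [← variance_of_integral_eq_zero (memLp_sum_pi hX).aemeasurable hmean, ← Finset.sum_fn,
    variance_sum_pi hX]
  exact Finset.sum_congr rfl fun i _ =>
    variance_of_integral_eq_zero (hX i).aemeasurable (hX₀ i)

end Pi

lemma integral_sq_add_prod {Ω Ω' : Type*} [MeasurableSpace Ω] [MeasurableSpace Ω']
    {μ : Measure Ω} {ν : Measure Ω'} [IsProbabilityMeasure μ] [IsProbabilityMeasure ν]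
    {X : Ω → ℝ} {Y : Ω' → ℝ} (hX : MemLp X 2 μ) (hY : MemLp Y 2 ν)
    (hX₀ : ∫ ω, X ω ∂μ = 0) (hY₀ : ∫ ω, Y ω ∂ν = 0) :
    ∫ ω, (X ω.1 + Y ω.2) ^ 2 ∂μ.prod ν = ∫ ω, X ω ^ 2 ∂μ + ∫ ω, Y ω ^ 2 ∂ν := by
  have hmean : ∫ ω, X ω.1 + Y ω.2 ∂μ.prod ν = 0 := by
    rw [integral_add ((hX.integrable one_le_two).comp_fst ν)
      ((hY.integrable one_le_two).comp_snd μ), integral_fun_fst, integral_fun_snd]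
    simp [hX₀, hY₀]
  rw [← variance_of_integral_eq_zero (X := fun ω : Ω × Ω' => X ω.1 + Y ω.2)
      ((hX.comp_fst ν).add (hY.comp_snd μ)).aemeasurable hmean,
    variance_add_prod hX hY, variance_of_integral_eq_zero hX.aemeasurable hX₀,
    variance_of_integral_eq_zero hY.aemeasurable hY₀]

lemma integral_sq_gaussianReal (v : NNReal) : ∫ t, t ^ 2 ∂gaussianReal 0 v = v :=
  (variance_of_integral_eq_zero aemeasurable_id integral_id_gaussianReal).symm.trans
    variance_id_gaussianReal

section StdGaussian

variable {n : ℕ}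

lemma memLp_mul_const_gaussianReal (μ : ℝ) (v : NNReal) (c : ℝ) :
    MemLp (fun t => t * c) 2 (gaussianReal μ v) :=
  (memLp_id_gaussianReal 2).mul_const c

lemma integral_mul_const_gaussianReal (v : NNReal) (c : ℝ) :
    ∫ t, t * c ∂gaussianReal 0 v = 0 := by
  rw [integral_mul_const, integral_id_gaussianReal, zero_mul]

lemma memLp_dot_stdGaussian (c : Fin n → ℝ) : MemLp (fun z => dot z c) 2 (stdGaussian n) :=
  memLp_sum_pi fun j => memLp_mul_const_gaussianReal 0 1 (c j)

lemma integral_dot_stdGaussian (c : Fin n → ℝ) : ∫ z, dot z c ∂stdGaussian n = 0 := by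
  simp [dot, _root_.stdGaussian, integral_mul_const_gaussianReal, integral_sum_pi fun j =>
    (memLp_mul_const_gaussianReal 0 1 (c j)).integrable one_le_two]

lemma integral_dot_sq_stdGaussian (c : Fin n → ℝ) :
    ∫ z, dot z c ^ 2 ∂stdGaussian n = c ⬝ᵥ c := by
  unfold dot _root_.stdGaussian
  rw [integral_sq_sum_pi (fun j => memLp_mul_const_gaussianReal 0 1 (c j))
    fun j => integral_mul_const_gaussianReal 1 (c j)]
  refine Finset.sum_congr rfl fun j _ => ?_
  simp_rw [mul_pow, integral_mul_const, integral_sq_gaussianReal]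
  simp [sq]

end StdGaussian

lemma dot_eq_dotProduct {n : ℕ} (u v : Fin n → ℝ) : dot u v = u ⬝ᵥ v := rfl

lemma mulVec'_sub {m d : ℕ} (M : Fin m → Fin d → ℝ) (x x' : Fin d → ℝ) :
    mulVec' M x - mulVec' M x' = mulVec' M (x - x') := by
  ext i
  simp [mulVec', mul_sub]

lemma l2_sq_eq_dotProduct {n : ℕ} (v : Fin n → ℝ) : l2 v ^ 2 = v ⬝ᵥ v :=
  (Real.sq_sqrt (Finset.sum_nonneg fun i _ => sq_nonneg (v i))).trans
    (Finset.sum_congr rfl fun i _ => sq (v i))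

lemma sub_dotProduct_sub_self {n : ℕ} (u v : Fin n → ℝ) :
    (u - v) ⬝ᵥ (u - v) = u ⬝ᵥ u - 2 * (u ⬝ᵥ v) + v ⬝ᵥ v := by
  simp only [sub_dotProduct, dotProduct_sub, dotProduct_comm v u]
  ring

lemma l2_sub_sq {n : ℕ} (u v : Fin n → ℝ) :
    l2 (u - v) ^ 2 = l2 u ^ 2 - 2 * (u ⬝ᵥ v) + l2 v ^ 2 := by
  simp only [l2_sq_eq_dotProduct, sub_dotProduct_sub_self]

lemma dotProduct_le_one_of_l2_eq_one {n : ℕ} {u v : Fin n → ℝ} (hu : l2 u = 1)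
    (hv : l2 v = 1) : u ⬝ᵥ v ≤ 1 := by
  have := sq_nonneg (l2 (u - v))
  rw [l2_sub_sq, hu, hv] at this
  linarith

lemma integral_sq_sum_dot_stdGaussianMatrix {m d : ℕ} (c : Fin m → Fin d → ℝ) :
    ∫ M, (∑ i, dot (M i) (c i)) ^ 2 ∂stdGaussianMatrix m d = ∑ i, c i ⬝ᵥ c i := by
  unfold stdGaussianMatrix
  rw [integral_sq_sum_pi (fun i => memLp_dot_stdGaussian (c i))
    fun i => integral_dot_stdGaussian (c i)]
  exact Finset.sum_congr rfl fun i _ => integral_dot_sq_stdGaussian (c i)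

lemma integral_sq_dot_add_dot_stdGaussian_prod {p m : ℕ} (a : Fin p → ℝ) (b : Fin m → ℝ) :
    ∫ gh, (dot gh.1 a + dot gh.2 b) ^ 2 ∂(stdGaussian p).prod (stdGaussian m)
      = a ⬝ᵥ a + b ⬝ᵥ b := by
  rw [integral_sq_add_prod (memLp_dot_stdGaussian a) (memLp_dot_stdGaussian b)
    (integral_dot_stdGaussian a) (integral_dot_stdGaussian b),
    integral_dot_sq_stdGaussian, integral_dot_sq_stdGaussian]

lemma integral_sq_sub_bilinear_stdGaussianMatrix {m d : ℕ} (x x' : Fin d → ℝ)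
    (y y' : Fin m → ℝ) :
    ∫ M, (dot (mulVec' M x) y - dot (mulVec' M x') y') ^ 2 ∂stdGaussianMatrix m d
      = (y ⬝ᵥ y) * (x ⬝ᵥ x) - 2 * ((y ⬝ᵥ y') * (x ⬝ᵥ x')) + (y' ⬝ᵥ y') * (x' ⬝ᵥ x') := by
  have hlin : ∀ M : Fin m → Fin d → ℝ, dot (mulVec' M x) y - dot (mulVec' M x') y'
      = ∑ i, dot (M i) (y i • x - y' i • x') := by
    intro M
    simp only [dot, mulVec', Finset.sum_mul, ← Finset.sum_sub_distrib]
    refine Finset.sum_congr rfl fun i _ => Finset.sum_congr rfl fun j _ => ?_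
    simp only [Pi.sub_apply, Pi.smul_apply, smul_eq_mul]
    ring
  simp_rw [hlin, integral_sq_sum_dot_stdGaussianMatrix, sub_dotProduct_sub_self,
    smul_dotProduct, dotProduct_smul, smul_eq_mul]
  simp only [← mul_assoc, Finset.sum_add_distrib, Finset.sum_sub_distrib, ← Finset.sum_mul]
  simp only [dotProduct, mul_assoc (2 : ℝ), ← Finset.mul_sum]

lemma integral_sq_sub_stdGaussian_prod {p m : ℕ} (a : ℝ) (u u' : Fin p → ℝ)
    (y y' : Fin m → ℝ) :
    ∫ gh, (a * dot gh.1 u + dot gh.2 y - (a * dot gh.1 u' + dot gh.2 y')) ^ 2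
        ∂(stdGaussian p).prod (stdGaussian m)
      = a ^ 2 * ((u - u') ⬝ᵥ (u - u')) + (y - y') ⬝ᵥ (y - y') := by
  have hlin : ∀ gh : (Fin p → ℝ) × (Fin m → ℝ),
      a * dot gh.1 u + dot gh.2 y - (a * dot gh.1 u' + dot gh.2 y')
        = dot gh.1 (a • (u - u')) + dot gh.2 (y - y') := by
    intro gh
    simp only [dot_eq_dotProduct, dotProduct_smul, dotProduct_sub, smul_eq_mul]
    ring
  simp_rw [hlin, integral_sq_dot_add_dot_stdGaussian_prod, smul_dotProduct, dotProduct_smul,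
    smul_eq_mul]
  ring

theorem gaussian_process_comparison {m d p : ℕ}
    (Ω : Fin p → Fin d → ℝ) (A : ℝ) (hA : 0 < A)
    (hframe : ∀ v : Fin d → ℝ, A * (l2 v) ^ 2 ≤ (l2 (mulVec' Ω v)) ^ 2)
    (x x' : Fin d → ℝ) (hx : l2 x = 1) (hx' : l2 x' = 1)
    (y y' : Fin m → ℝ) (hy : l2 y = 1) (hy' : l2 y' = 1) :
    (∫ M, (dot (mulVec' M x) y - dot (mulVec' M x') y') ^ 2 ∂(stdGaussianMatrix m d)) ≤
      (∫ gh : (Fin p → ℝ) × (Fin m → ℝ),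
          ((1 / Real.sqrt A) * dot gh.1 (mulVec' Ω x) + dot gh.2 y -
            ((1 / Real.sqrt A) * dot gh.1 (mulVec' Ω x') + dot gh.2 y')) ^ 2
        ∂((stdGaussian p).prod (stdGaussian m))) ∧
    (x = x' →
      (∫ M, (dot (mulVec' M x) y - dot (mulVec' M x') y') ^ 2 ∂(stdGaussianMatrix m d)) =
        (∫ gh : (Fin p → ℝ) × (Fin m → ℝ),
            ((1 / Real.sqrt A) * dot gh.1 (mulVec' Ω x) + dot gh.2 y -
              ((1 / Real.sqrt A) * dot gh.1 (mulVec' Ω x') + dot gh.2 y')) ^ 2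
          ∂((stdGaussian p).prod (stdGaussian m)))) := by
  rw [integral_sq_sub_bilinear_stdGaussianMatrix, integral_sq_sub_stdGaussian_prod, mulVec'_sub,
    one_div, inv_pow, Real.sq_sqrt hA.le]
  simp only [← l2_sq_eq_dotProduct, l2_sub_sq y y', hx, hx', hy, hy', one_pow]
  have hΩ : l2 (x - x') ^ 2 ≤ A⁻¹ * l2 (mulVec' Ω (x - x')) ^ 2 :=
    (le_inv_mul_iff₀ hA).2 (hframe (x - x'))
  rw [l2_sub_sq, hx, hx', one_pow] at hΩ
  have hs := dotProduct_le_one_of_l2_eq_one hx hx'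
  have ht := dotProduct_le_one_of_l2_eq_one hy hy'
  refine ⟨by nlinarith [mul_nonneg (sub_nonneg.2 hs) (sub_nonneg.2 ht)], ?_⟩
  rintro rfl
  have hΩ0 : l2 (mulVec' Ω 0) = 0 := by simp [l2, mulVec']
  simp [← l2_sq_eq_dotProduct, hx, hΩ0]
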